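/- arXiv:1304.3928 — 2 statements merged into one kernel-verified Lean document; each statement's English description precedes it below -/
import Mathlib

section
/- Let m ≥ 2 be a natural number, let q be a positive rational number, and let b be a positive real number such that b² is rational. If the principal argument of the complex number q + bi equals π/(m+1), then m = 2, m = 3 or m = 5. -/
/-!
Doubling the angle removes the square root: `cos (2 arg z) = (re² - im²) / (re² + im²)` is
rational as soon as `re²` and `im²` are. Hence `cos (2π / (m + 1))` is a rational value of the
cosine at a rational multiple of `π`, and Niven's theorem leaves only `2 / (m + 1) ∈ {1/3, 1/2, 2/3}`
for `m ≥ 2`.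
-/

open Complex Real

theorem Complex.cos_two_mul_arg {z : ℂ} (hz : z ≠ 0) :
    Real.cos (2 * arg z) = (z.re ^ 2 - z.im ^ 2) / normSq z := by
  have hn : z.re ^ 2 + z.im ^ 2 ≠ 0 := by
    simpa only [normSq_apply, ← sq] using normSq_eq_zero.not.mpr hz
  rw [Real.cos_two_mul, cos_arg hz, div_pow, ← normSq_eq_norm_sq, normSq_apply, ← sq, ← sq]
  field_simp
  ring

theorem Complex.exists_rat_cos_two_mul_arg {z : ℂ} (hre : ∃ a : ℚ, z.re ^ 2 = a)
    (him : ∃ c : ℚ, z.im ^ 2 = c) : ∃ r : ℚ, Real.cos (2 * arg z) = r := by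
  obtain rfl | hz := eq_or_ne z 0
  · exact ⟨1, by simp⟩
  obtain ⟨a, ha⟩ := hre
  obtain ⟨c, hc⟩ := him
  refine ⟨(a - c) / (a + c), ?_⟩
  rw [cos_two_mul_arg hz, normSq_apply, ← sq, ← sq, ha, hc]
  push_cast
  rfl

theorem dim_eq_two_three_five_general (m : ℕ) (hm : 2 ≤ m) (q : ℚ)
    (b : ℝ) (hb2 : ∃ r : ℚ, b ^ 2 = (r : ℝ))
    (harg : Complex.arg ((q : ℂ) + b * Complex.I) = Real.pi / (m + 1)) :
    m = 2 ∨ m = 3 ∨ m = 5 := by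
  have hcos : ∃ r : ℚ, Real.cos ((2 / (m + 1) : ℚ) * π) = r := by
    have h := exists_rat_cos_two_mul_arg (z := (q : ℂ) + b * I) ⟨q ^ 2, by simp⟩
      (by simpa using hb2)
    rwa [harg, show 2 * (π / (m + 1)) = ((2 / (m + 1) : ℚ) : ℝ) * π by push_cast; ring] at h
  have hbnd : (2 / (m + 1) : ℚ) ∈ Set.Icc 0 1 :=
    ⟨by positivity, (div_le_one (by positivity)).mpr (by norm_cast; omega)⟩
  have h := niven_angle_div_pi_eq hcos hbnd
  simp only [Set.mem_insert_iff, Set.mem_singleton_iff] at h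
  rcases h with h | h | h | h | h <;> field_simp at h <;> norm_cast at h <;> omega

theorem dim_eq_two_three_five (m : ℕ) (hm : 2 ≤ m) (q : ℚ) (hq : 0 < q)
    (b : ℝ) (hb : 0 < b) (hb2 : ∃ r : ℚ, b ^ 2 = (r : ℝ))
    (harg : Complex.arg ((q : ℂ) + b * Complex.I) = Real.pi / (m + 1)) :
    m = 2 ∨ m = 3 ∨ m = 5 :=
  dim_eq_two_three_five_general m hm q b hb2 harg
end

section
/- Let A be a commutative ring which is an ℝ-algebra, let a, h ∈ A, and let b, t be real numbers with b ≠ 0. Assume a·a = (−b²)·(h·h), where the real scalar acts via the algebra structure. Then for every natural number m, (t·h + a)^{m+1} = Re((t + bi)^{m+1})·h^{m+1} + (Im((t + bi)^{m+1})/b)·(h^m · a), where t + bi is a complex number and again real scalars act via the algebra structure. -/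
/-!
If `u * u = -(h * h)`, then `u` plays the role of `i • h`, so `z ↦ z.re • h + z.im • u` turns
multiplication in `ℂ` into multiplication in `A`, up to one factor of `h` per factor.
The theorem is the case `u = b⁻¹ • a`, `z = t + b i`.
-/

open Complex

section

variable {A : Type*} [CommRing A] [Algebra ℝ A] {h u : A}

theorem re_smul_add_im_smul_mul_of_mul_self_eq_neg (hu : u * u = -(h * h)) (z w : ℂ) (k : ℕ) :
    (z.re • h ^ (k + 1) + z.im • (h ^ k * u)) * (w.re • h + w.im • u) =
      (z * w).re • h ^ (k + 2) + (z * w).im • (h ^ (k + 1) * u) := by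
  simp only [mul_re, mul_im, Algebra.smul_def, map_add, map_sub, map_mul]
  linear_combination (algebraMap ℝ A z.im * algebraMap ℝ A w.im * h ^ k) * hu

theorem re_smul_add_im_smul_pow_of_mul_self_eq_neg (hu : u * u = -(h * h)) (w : ℂ) (m : ℕ) :
    (w.re • h + w.im • u) ^ (m + 1) =
      (w ^ (m + 1)).re • h ^ (m + 1) + (w ^ (m + 1)).im • (h ^ m * u) := by
  induction m with
  | zero => simp
  | succ m ih => rw [pow_succ, ih, re_smul_add_im_smul_mul_of_mul_self_eq_neg hu, ← pow_succ]

end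

theorem de_moivre_in_algebra {A : Type*} [CommRing A] [Algebra ℝ A]
    (a h : A) (b t : ℝ) (hb : b ≠ 0)
    (hsq : a * a = (-(b ^ 2)) • (h * h)) (m : ℕ) :
    (t • h + a) ^ (m + 1) =
      (((t : ℂ) + b * Complex.I) ^ (m + 1)).re • h ^ (m + 1) +
        ((((t : ℂ) + b * Complex.I) ^ (m + 1)).im / b) • (h ^ m * a) := by
  have hu : (b⁻¹ • a) * (b⁻¹ • a) = -(h * h) := by
    have hscalar : b⁻¹ * b⁻¹ * -b ^ 2 = -1 := by field_simp
    rw [smul_mul_smul_comm, hsq, smul_smul, hscalar, neg_one_smul]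
  have hlin : t • h + a = ((t : ℂ) + b * I).re • h + ((t : ℂ) + b * I).im • (b⁻¹ • a) := by
    simp [smul_smul, hb]
  rw [hlin, re_smul_add_im_smul_pow_of_mul_self_eq_neg hu, mul_smul_comm, smul_smul,
    div_eq_mul_inv]
end
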